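/- Let u be a classical solution of the forward problem, and write ‖F‖² := ∫₀^T ∫₀^ℓ F(x,t)² dx dt and C₁² := (5ℓρ₀/3)(C_e² − 1) with C_e² := exp(T/ρ₀). Then the boundary slope trace estimates of Corollary 1 hold: ∫₀^T (∂ₓu(0,t))² dt ≤ (C₁²/r₀) ‖F‖² and ∫₀^T (∂ₓu(ℓ,t))² dt ≤ (C₁²/r₀) ‖F‖². -/

import Mathlib

/-!
Since `u(·, t)` vanishes at both ends, integrating `(ℓ - x) uₓₓ` and `x uₓₓ` by parts gives
`-ℓ uₓ(0, t)` and `ℓ uₓ(ℓ, t)`, so Cauchy–Schwarz yields `uₓ(0, t)², uₓ(ℓ, t)² ≤ (ℓ / 3) ∫ uₓₓ²`.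

For the energy `E(t) = ∫ ρ_A uₜ² + T_r uₓ² + r uₓₓ²`, differentiating under the integral and
integrating by parts in `x` (the boundary conditions kill the boundary flux) gives
`E' = ∫ 2 uₜ F - 2 μ uₜ² - 2 κ uₓₓₜ² ≤ E / ρ₀ + ∫ F²`. Since `E(0) = 0`, Gronwall gives
`E(t) ≤ exp (t / ρ₀) ‖F‖²`, and integrating `r₀ ∫ uₓₓ² ≤ E` over `[0, T]` bounds `∫∫ uₓₓ²`
by `(ρ₀ / r₀) (exp (T / ρ₀) - 1) ‖F‖²`.
-/

open Set

/-- A classical solution of the forward problem for the damped Euler–Bernoulli beam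
equation `ρ_A(x) uₜₜ + μ(x) uₜ − (T_r(x) uₓ)ₓ + (r(x) uₓₓ + κ(x) uₓₓₜ)ₓₓ = F(x,t)` on
`(0,ℓ) × (0,T)`, with homogeneous initial conditions and simply supported boundary
conditions.  The fields `ux, uxx, ut, utt, uxt, uxxt` are the partial derivatives of
`u`, `Ax` is the spatial derivative of `T_r(x) uₓ`, and `Bx, Bxx` are the first and
second spatial derivatives of the bending moment `B(x,t) = r(x) uₓₓ + κ(x) uₓₓₜ`. -/
structure ForwardSol (ℓ T : ℝ) (ρA μ Tr r κ : ℝ → ℝ) (F : ℝ → ℝ → ℝ) where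
  u : ℝ → ℝ → ℝ
  ux : ℝ → ℝ → ℝ
  uxx : ℝ → ℝ → ℝ
  ut : ℝ → ℝ → ℝ
  utt : ℝ → ℝ → ℝ
  uxt : ℝ → ℝ → ℝ
  uxxt : ℝ → ℝ → ℝ
  Ax : ℝ → ℝ → ℝ
  Bx : ℝ → ℝ → ℝ
  Bxx : ℝ → ℝ → ℝ
  smooth : ContDiffOn ℝ (⊤ : ℕ∞) (fun p : ℝ × ℝ => u p.1 p.2) (Icc 0 ℓ ×ˢ Icc 0 T)
  hux : ∀ x ∈ Icc (0:ℝ) ℓ, ∀ t ∈ Icc (0:ℝ) T, HasDerivAt (fun y => u y t) (ux x t) x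
  huxx : ∀ x ∈ Icc (0:ℝ) ℓ, ∀ t ∈ Icc (0:ℝ) T, HasDerivAt (fun y => ux y t) (uxx x t) x
  hut : ∀ x ∈ Icc (0:ℝ) ℓ, ∀ t ∈ Icc (0:ℝ) T, HasDerivAt (fun s => u x s) (ut x t) t
  hutt : ∀ x ∈ Icc (0:ℝ) ℓ, ∀ t ∈ Icc (0:ℝ) T, HasDerivAt (fun s => ut x s) (utt x t) t
  huxt : ∀ x ∈ Icc (0:ℝ) ℓ, ∀ t ∈ Icc (0:ℝ) T, HasDerivAt (fun s => ux x s) (uxt x t) t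
  huxxt : ∀ x ∈ Icc (0:ℝ) ℓ, ∀ t ∈ Icc (0:ℝ) T, HasDerivAt (fun s => uxx x s) (uxxt x t) t
  hAx : ∀ x ∈ Icc (0:ℝ) ℓ, ∀ t ∈ Icc (0:ℝ) T,
    HasDerivAt (fun y => Tr y * ux y t) (Ax x t) x
  hBx : ∀ x ∈ Icc (0:ℝ) ℓ, ∀ t ∈ Icc (0:ℝ) T,
    HasDerivAt (fun y => r y * uxx y t + κ y * uxxt y t) (Bx x t) x
  hBxx : ∀ x ∈ Icc (0:ℝ) ℓ, ∀ t ∈ Icc (0:ℝ) T, HasDerivAt (fun y => Bx y t) (Bxx x t) x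
  cont_ux : ContinuousOn (fun p : ℝ × ℝ => ux p.1 p.2) (Icc 0 ℓ ×ˢ Icc 0 T)
  cont_uxx : ContinuousOn (fun p : ℝ × ℝ => uxx p.1 p.2) (Icc 0 ℓ ×ˢ Icc 0 T)
  cont_ut : ContinuousOn (fun p : ℝ × ℝ => ut p.1 p.2) (Icc 0 ℓ ×ˢ Icc 0 T)
  cont_utt : ContinuousOn (fun p : ℝ × ℝ => utt p.1 p.2) (Icc 0 ℓ ×ˢ Icc 0 T)
  cont_uxt : ContinuousOn (fun p : ℝ × ℝ => uxt p.1 p.2) (Icc 0 ℓ ×ˢ Icc 0 T)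
  cont_uxxt : ContinuousOn (fun p : ℝ × ℝ => uxxt p.1 p.2) (Icc 0 ℓ ×ˢ Icc 0 T)
  cont_Ax : ContinuousOn (fun p : ℝ × ℝ => Ax p.1 p.2) (Icc 0 ℓ ×ˢ Icc 0 T)
  cont_Bx : ContinuousOn (fun p : ℝ × ℝ => Bx p.1 p.2) (Icc 0 ℓ ×ˢ Icc 0 T)
  cont_Bxx : ContinuousOn (fun p : ℝ × ℝ => Bxx p.1 p.2) (Icc 0 ℓ ×ˢ Icc 0 T)
  pde : ∀ x ∈ Ioo (0:ℝ) ℓ, ∀ t ∈ Ioo (0:ℝ) T,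
    ρA x * utt x t + μ x * ut x t - Ax x t + Bxx x t = F x t
  init_u : ∀ x ∈ Ioo (0:ℝ) ℓ, u x 0 = 0
  init_ut : ∀ x ∈ Ioo (0:ℝ) ℓ, ut x 0 = 0
  bc_u0 : ∀ t ∈ Icc (0:ℝ) T, u 0 t = 0
  bc_ul : ∀ t ∈ Icc (0:ℝ) T, u ℓ t = 0
  bc_m0 : ∀ t ∈ Icc (0:ℝ) T, r 0 * uxx 0 t + κ 0 * uxxt 0 t = 0
  bc_ml : ∀ t ∈ Icc (0:ℝ) T, r ℓ * uxx ℓ t + κ ℓ * uxxt ℓ t = 0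

open MeasureTheory intervalIntegral Filter Topology Interval

theorem ContinuousOn.comp_fst_prod {α β γ : Type*} [TopologicalSpace α] [TopologicalSpace β]
    [TopologicalSpace γ] {f : α → γ} {s : Set α} (hf : ContinuousOn f s) (t : Set β) :
    ContinuousOn (fun p : α × β => f p.1) (s ×ˢ t) :=
  hf.comp continuousOn_fst fun _ hp => hp.1

theorem HasDerivAt.eq_zero_of_eventuallyEq_zero {f : ℝ → ℝ} {f' x : ℝ}
    (h : HasDerivAt f f' x) (hf : f =ᶠ[𝓝 x] fun _ => 0) : f' = 0 :=
  h.unique ((hasDerivAt_const x 0).congr_of_eventuallyEq hf)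

section IntervalIntegral

variable {a b : ℝ}

theorem sq_intervalIntegral_mul_le (hab : a ≤ b) {f g : ℝ → ℝ}
    (hf : ContinuousOn f (Icc a b)) (hg : ContinuousOn g (Icc a b)) :
    (∫ x in a..b, f x * g x) ^ 2 ≤ (∫ x in a..b, f x ^ 2) * ∫ x in a..b, g x ^ 2 := by
  have hf2 : IntervalIntegrable (fun x => f x ^ 2) volume a b :=
    (hf.pow 2).intervalIntegrable_of_Icc hab
  have hg2 : IntervalIntegrable (fun x => g x ^ 2) volume a b :=
    (hg.pow 2).intervalIntegrable_of_Icc hab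
  have hfg : IntervalIntegrable (fun x => f x * g x) volume a b :=
    (hf.mul hg).intervalIntegrable_of_Icc hab
  have hquadratic : ∀ c : ℝ, 0 ≤ (∫ x in a..b, f x ^ 2) * (c * c)
      + (-2 * ∫ x in a..b, f x * g x) * c + ∫ x in a..b, g x ^ 2 := by
    intro c
    have hexpand : ∫ x in a..b, (c * f x - g x) ^ 2 = (∫ x in a..b, f x ^ 2) * (c * c)
        + (-2 * ∫ x in a..b, f x * g x) * c + ∫ x in a..b, g x ^ 2 := by
      have : (fun x => (c * f x - g x) ^ 2)
          = fun x => c ^ 2 * f x ^ 2 - 2 * c * (f x * g x) + g x ^ 2 := by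
        funext x; ring
      rw [this, integral_add ((hf2.const_mul _).sub (hfg.const_mul _)) hg2,
        integral_sub (hf2.const_mul _) (hfg.const_mul _),
        intervalIntegral.integral_const_mul, intervalIntegral.integral_const_mul]
      ring
    exact hexpand ▸ integral_nonneg hab fun x _ => sq_nonneg _
  have := discrim_le_zero hquadratic
  rw [discrim] at this
  linarith

section BoundaryTrace

variable {v v' v'' : ℝ → ℝ} (hab : a ≤ b)
  (hv : ∀ x ∈ Icc a b, HasDerivAt v (v' x) x) (hv' : ∀ x ∈ Icc a b, HasDerivAt v' (v'' x) x)
  (hv'' : ContinuousOn v'' (Icc a b)) (ha : v a = 0) (hb : v b = 0)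
include hab hv hv' hv'' ha hb

theorem integral_sub_mul_deriv_deriv_of_eq_zero :
    ∫ x in a..b, (b - x) * v'' x = -((b - a) * v' a) := by
  have hderiv : ∀ x ∈ uIcc a b,
      HasDerivAt (fun y => (b - y) * v' y + v y) ((b - x) * v'' x) x := by
    intro x hx
    rw [uIcc_of_le hab] at hx
    exact ((((hasDerivAt_id' x).const_sub b).mul (hv' x hx)).add (hv x hx)).congr_deriv
      (by ring)
  rw [integral_eq_sub_of_hasDerivAt hderiv
    (((continuousOn_const.sub continuousOn_id).mul hv'').intervalIntegrable_of_Icc hab), ha, hb]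
  ring

theorem integral_mul_deriv_deriv_of_eq_zero :
    ∫ x in a..b, (x - a) * v'' x = (b - a) * v' b := by
  have hderiv : ∀ x ∈ uIcc a b,
      HasDerivAt (fun y => (y - a) * v' y - v y) ((x - a) * v'' x) x := by
    intro x hx
    rw [uIcc_of_le hab] at hx
    exact ((((hasDerivAt_id' x).sub_const a).mul (hv' x hx)).sub (hv x hx)).congr_deriv
      (by ring)
  rw [integral_eq_sub_of_hasDerivAt hderiv
    (((continuousOn_id.sub continuousOn_const).mul hv'').intervalIntegrable_of_Icc hab), ha, hb]
  ring

end BoundaryTrace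

theorem sq_deriv_le_of_eq_zero {v v' v'' : ℝ → ℝ} (hab : a < b)
    (hv : ∀ x ∈ Icc a b, HasDerivAt v (v' x) x) (hv' : ∀ x ∈ Icc a b, HasDerivAt v' (v'' x) x)
    (hv'' : ContinuousOn v'' (Icc a b)) (ha : v a = 0) (hb : v b = 0) :
    v' a ^ 2 ≤ (b - a) / 3 * ∫ x in a..b, v'' x ^ 2 ∧
      v' b ^ 2 ≤ (b - a) / 3 * ∫ x in a..b, v'' x ^ 2 := by
  have hcs_left := sq_intervalIntegral_mul_le hab.le
    (f := fun x => b - x) (continuousOn_const.sub continuousOn_id) hv''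
  have hcs_right := sq_intervalIntegral_mul_le hab.le
    (f := fun x => x - a) (continuousOn_id.sub continuousOn_const) hv''
  have hweight_left : ∫ x in a..b, (b - x) ^ 2 = (b - a) ^ 3 / 3 := by
    simp [integral_comp_sub_left fun x => x ^ 2]; norm_num
  have hweight_right : ∫ x in a..b, (x - a) ^ 2 = (b - a) ^ 3 / 3 := by
    simp [integral_comp_sub_right fun x => x ^ 2]; norm_num
  rw [integral_sub_mul_deriv_deriv_of_eq_zero hab.le hv hv' hv'' ha hb, hweight_left]
    at hcs_left
  rw [integral_mul_deriv_deriv_of_eq_zero hab.le hv hv' hv'' ha hb, hweight_right] at hcs_right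
  have hpos : 0 < (b - a) ^ 2 := by positivity
  exact ⟨le_of_mul_le_mul_left (by linear_combination hcs_left) hpos,
    le_of_mul_le_mul_left (by linear_combination hcs_right) hpos⟩

variable {E : Type*} [NormedAddCommGroup E]

theorem intervalIntegrable_of_continuousOn_prod {c d : ℝ} {f : ℝ → ℝ → E} (hab : a ≤ b)
    (hf : ContinuousOn (fun p : ℝ × ℝ => f p.1 p.2) (Icc a b ×ˢ Icc c d)) {t : ℝ}
    (ht : t ∈ Icc c d) : IntervalIntegrable (fun x => f x t) volume a b :=
  (hf.uncurry_right t ht).intervalIntegrable_of_Icc hab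

variable [NormedSpace ℝ E]

theorem ContinuousOn.integral_hasDerivAt_right [CompleteSpace E] {g : ℝ → E}
    (hg : ContinuousOn g (Icc a b)) {t : ℝ} (ht : t ∈ Ioo a b) :
    HasDerivAt (fun u => ∫ s in a..u, g s) (g t) t :=
  intervalIntegral.integral_hasDerivAt_right
    ((hg.mono (Icc_subset_Icc le_rfl ht.2.le)).intervalIntegrable_of_Icc ht.1.le)
    ((hg.mono Ioo_subset_Icc_self).stronglyMeasurableAtFilter isOpen_Ioo t ht)
    (hg.continuousAt (Icc_mem_nhds ht.1 ht.2))

section ParametricIntegral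

variable {c d : ℝ} {f f' : ℝ → ℝ → E}

theorem continuousOn_intervalIntegral_of_continuousOn_prod (hab : a ≤ b)
    (hf : ContinuousOn (fun p : ℝ × ℝ => f p.1 p.2) (Icc a b ×ˢ Icc c d)) :
    ContinuousOn (fun t => ∫ x in a..b, f x t) (Icc c d) := by
  obtain ⟨M, hM⟩ := (isCompact_Icc.prod isCompact_Icc).exists_bound_of_continuousOn hf
  simp_rw [integral_of_le hab]
  refine continuousOn_of_dominated (bound := fun _ => M) (fun t ht => ?_) (fun t ht => ?_)
    (integrableOn_const measure_Ioc_lt_top.ne) ?_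
  · exact ((hf.uncurry_right t ht).mono Ioc_subset_Icc_self).aestronglyMeasurable
      measurableSet_Ioc
  · filter_upwards [ae_restrict_mem measurableSet_Ioc] with x hx
    exact hM (x, t) ⟨Ioc_subset_Icc_self hx, ht⟩
  · filter_upwards [ae_restrict_mem measurableSet_Ioc] with x hx
    exact hf.uncurry_left x (Ioc_subset_Icc_self hx)

theorem hasDerivAt_intervalIntegral_of_continuousOn_prod (hab : a ≤ b) {t₀ : ℝ}
    (ht₀ : t₀ ∈ Ioo c d)
    (hf : ContinuousOn (fun p : ℝ × ℝ => f p.1 p.2) (Icc a b ×ˢ Icc c d))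
    (hf' : ContinuousOn (fun p : ℝ × ℝ => f' p.1 p.2) (Icc a b ×ˢ Icc c d))
    (hd : ∀ x ∈ Icc a b, ∀ t ∈ Ioo c d, HasDerivAt (fun s => f x s) (f' x t) t) :
    HasDerivAt (fun t => ∫ x in a..b, f x t) (∫ x in a..b, f' x t₀) t₀ := by
  obtain ⟨M, hM⟩ := (isCompact_Icc.prod isCompact_Icc).exists_bound_of_continuousOn hf'
  have hmeas : ∀ {t}, t ∈ Icc c d → ∀ {g : ℝ → ℝ → E},
      ContinuousOn (fun p : ℝ × ℝ => g p.1 p.2) (Icc a b ×ˢ Icc c d) →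
      AEStronglyMeasurable (fun x => g x t) (volume.restrict (Ι a b)) := fun ht _ hg => by
    rw [uIoc_of_le hab]
    exact ((hg.uncurry_right _ ht).mono Ioc_subset_Icc_self).aestronglyMeasurable
      measurableSet_Ioc
  refine (hasDerivAt_integral_of_dominated_loc_of_deriv_le (Ioo_mem_nhds ht₀.1 ht₀.2)
    (F := fun t x => f x t) (F' := fun t x => f' x t) (bound := fun _ => M) ?_
    (intervalIntegrable_of_continuousOn_prod hab hf (Ioo_subset_Icc_self ht₀))
    (hmeas (Ioo_subset_Icc_self ht₀) hf') ?_ intervalIntegrable_const ?_).2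
  · filter_upwards [Ioo_mem_nhds ht₀.1 ht₀.2] with t ht
    exact hmeas (Ioo_subset_Icc_self ht) hf
  · refine Eventually.of_forall fun x hx t ht => hM (x, t) ⟨?_, Ioo_subset_Icc_self ht⟩
    exact Ioc_subset_Icc_self (uIoc_of_le hab ▸ hx)
  · refine Eventually.of_forall fun x hx t ht => hd x ?_ t ht
    exact Ioc_subset_Icc_self (uIoc_of_le hab ▸ hx)

end ParametricIntegral

end IntervalIntegral

theorem hasDerivAt_partial_comm {a b c d : ℝ} {v vx vt vxt : ℝ → ℝ → ℝ}
    (hvx : ∀ x ∈ Icc a b, ∀ t ∈ Icc c d, HasDerivAt (fun y => v y t) (vx x t) x)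
    (hvt : ∀ x ∈ Icc a b, ∀ t ∈ Ioo c d, HasDerivAt (fun s => v x s) (vt x t) t)
    (hvxt : ∀ x ∈ Icc a b, ∀ t ∈ Ioo c d, HasDerivAt (fun s => vx x s) (vxt x t) t)
    (hcont_vx : ContinuousOn (fun p : ℝ × ℝ => vx p.1 p.2) (Icc a b ×ˢ Icc c d))
    (hcont_vxt : ContinuousOn (fun p : ℝ × ℝ => vxt p.1 p.2) (Icc a b ×ˢ Icc c d))
    {x t : ℝ} (hx : x ∈ Ioo a b) (ht : t ∈ Ioo c d) :
    HasDerivAt (fun y => vt y t) (vxt x t) x := by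
  have hab : a ≤ b := (hx.1.trans hx.2).le
  have hsub : ∀ {y}, y ∈ Icc a b → Icc a y ⊆ Icc a b := fun hy => Icc_subset_Icc le_rfl hy.2
  have hv_eq : ∀ y ∈ Icc a b, ∀ τ ∈ Icc c d, v y τ - v a τ = ∫ s in a..y, vx s τ :=
    fun y hy τ hτ => (integral_eq_sub_of_hasDerivAt
      (fun s hs => hvx s (hsub hy (uIcc_of_le hy.1 ▸ hs)) τ hτ)
      (((hcont_vx.uncurry_right τ hτ).mono (hsub hy)).intervalIntegrable_of_Icc hy.1)).symm
  have hvt_eq : ∀ y ∈ Icc a b, vt y t - vt a t = ∫ s in a..y, vxt s t := by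
    intro y hy
    have hrect : Icc a y ×ˢ Icc c d ⊆ Icc a b ×ˢ Icc c d := prod_mono (hsub hy) le_rfl
    refine ((hvt y hy t ht).sub (hvt a (left_mem_Icc.2 hab) t ht)).unique ?_
    refine (hasDerivAt_intervalIntegral_of_continuousOn_prod hy.1 ht (hcont_vx.mono hrect)
      (hcont_vxt.mono hrect) fun s hs τ hτ => hvxt s (hsub hy hs) τ hτ).congr_of_eventuallyEq ?_
    filter_upwards [Ioo_mem_nhds ht.1 ht.2] with τ hτ
    exact hv_eq y hy τ (Ioo_subset_Icc_self hτ)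
  refine (((hcont_vxt.uncurry_right t (Ioo_subset_Icc_self ht)).integral_hasDerivAt_right
    hx).const_add (vt a t)).congr_of_eventuallyEq ?_
  filter_upwards [Ioo_mem_nhds hx.1 hx.2] with y hy
  rw [← hvt_eq y (Ioo_subset_Icc_self hy)]
  ring

theorem le_exp_mul_integral_of_hasDerivAt_le {a b K : ℝ} {E E' g : ℝ → ℝ} (hK : 0 ≤ K)
    (hE : ContinuousOn E (Icc a b)) (hg : ContinuousOn g (Icc a b))
    (hg_nonneg : ∀ t ∈ Icc a b, 0 ≤ g t) (hE' : ∀ t ∈ Ioo a b, HasDerivAt E (E' t) t)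
    (hE'_le : ∀ t ∈ Ioo a b, E' t ≤ K * E t + g t) (ha : E a ≤ 0) {t : ℝ} (ht : t ∈ Icc a b) :
    E t ≤ Real.exp (K * (t - a)) * ∫ s in a..b, g s := by
  have hab : a ≤ b := ht.1.trans ht.2
  have hg_int : IntervalIntegrable g volume a b := hg.intervalIntegrable_of_Icc hab
  set H : ℝ → ℝ := fun t => Real.exp (-(K * (t - a))) * E t - ∫ s in a..t, g s with hH
  have hH_cont : ContinuousOn H (Icc a b) := by
    refine ((Real.continuous_exp.comp_continuousOn (by fun_prop)).mul hE).sub ?_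
    exact uIcc_of_le hab ▸ continuousOn_primitive_interval' hg_int left_mem_uIcc
  have hH' : ∀ t ∈ Ioo a b,
      HasDerivAt H (Real.exp (-(K * (t - a))) * (E' t - K * E t) - g t) t := by
    intro t ht
    have hexp : HasDerivAt (fun t => Real.exp (-(K * (t - a))))
        (Real.exp (-(K * (t - a))) * -K) t := by
      simpa using ((((hasDerivAt_id t).sub_const a).const_mul K).neg).exp
    exact ((hexp.mul (hE' t ht)).sub (hg.integral_hasDerivAt_right ht)).congr_deriv (by ring)
  have hH_anti : AntitoneOn H (Icc a b) := by
    refine antitoneOn_of_hasDerivWithinAt_nonpos (convex_Icc a b) hH_cont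
      (fun t ht => (hH' t (by simpa using ht)).hasDerivWithinAt) fun t ht => ?_
    rw [interior_Icc] at ht
    have hexp_le : Real.exp (-(K * (t - a))) ≤ 1 :=
      Real.exp_le_one_iff.2 (neg_nonpos.2 (mul_nonneg hK (sub_nonneg.2 ht.1.le)))
    have hg_t := hg_nonneg t (Ioo_subset_Icc_self ht)
    calc Real.exp (-(K * (t - a))) * (E' t - K * E t) - g t
        ≤ Real.exp (-(K * (t - a))) * g t - g t := by gcongr; linarith [hE'_le t ht]
      _ ≤ 1 * g t - g t := by gcongr
      _ = 0 := by ring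
  have hHt : Real.exp (-(K * (t - a))) * E t ≤ ∫ s in a..t, g s := by
    have := hH_anti (left_mem_Icc.2 hab) ht ht.1
    simp only [hH, sub_self, mul_zero, neg_zero, Real.exp_zero, one_mul, integral_same,
      sub_zero] at this
    linarith
  have hprimitive_le : ∫ s in a..t, g s ≤ ∫ s in a..b, g s := by
    refine integral_mono_interval le_rfl ht.1 ht.2 ?_ hg_int
    filter_upwards [ae_restrict_mem measurableSet_Ioc] with s hs
    exact hg_nonneg s (Ioc_subset_Icc_self hs)
  rw [← div_le_iff₀' (Real.exp_pos _), div_eq_inv_mul, ← Real.exp_neg]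
  exact hHt.trans hprimitive_le

namespace ForwardSol

variable {ℓ T : ℝ} {ρA μ Tr r κ : ℝ → ℝ} {F : ℝ → ℝ → ℝ} (sol : ForwardSol ℓ T ρA μ Tr r κ F)

def energyDensity (x t : ℝ) : ℝ :=
  ρA x * sol.ut x t ^ 2 + Tr x * sol.ux x t ^ 2 + r x * sol.uxx x t ^ 2

def energyDensityDeriv (x t : ℝ) : ℝ :=
  2 * ρA x * sol.ut x t * sol.utt x t + 2 * Tr x * sol.ux x t * sol.uxt x t
    + 2 * r x * sol.uxx x t * sol.uxxt x t

def powerDensity (x t : ℝ) : ℝ :=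
  2 * sol.ut x t * F x t - 2 * μ x * sol.ut x t ^ 2 - 2 * κ x * sol.uxxt x t ^ 2

def flux (x t : ℝ) : ℝ :=
  2 * sol.ut x t * (Tr x * sol.ux x t - sol.Bx x t)
    + 2 * sol.uxt x t * (r x * sol.uxx x t + κ x * sol.uxxt x t)

noncomputable def energy (t : ℝ) : ℝ := ∫ x in (0:ℝ)..ℓ, sol.energyDensity x t

theorem ut_eq_zero_of_u_eq_zero {x₀ : ℝ} (hx₀ : x₀ ∈ Icc 0 ℓ)
    (hu : ∀ t ∈ Icc 0 T, sol.u x₀ t = 0) {t : ℝ} (ht : t ∈ Ioo 0 T) : sol.ut x₀ t = 0 :=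
  (sol.hut x₀ hx₀ t (Ioo_subset_Icc_self ht)).eq_zero_of_eventuallyEq_zero
    (eventually_of_mem (Icc_mem_nhds ht.1 ht.2) hu)

theorem energy_zero (hℓ : 0 ≤ ℓ) (hT : 0 ≤ T) : sol.energy 0 = 0 := by
  have h0 : (0:ℝ) ∈ Icc 0 T := left_mem_Icc.2 hT
  have hux : ∀ x ∈ Ioo 0 ℓ, sol.ux x 0 = 0 := fun x hx =>
    (sol.hux x (Ioo_subset_Icc_self hx) 0 h0).eq_zero_of_eventuallyEq_zero
      (eventually_of_mem (Ioo_mem_nhds hx.1 hx.2) sol.init_u)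
  have huxx : ∀ x ∈ Ioo 0 ℓ, sol.uxx x 0 = 0 := fun x hx =>
    (sol.huxx x (Ioo_subset_Icc_self hx) 0 h0).eq_zero_of_eventuallyEq_zero
      (eventually_of_mem (Ioo_mem_nhds hx.1 hx.2) hux)
  rw [energy, integral_of_le hℓ, ← Measure.restrict_congr_set Ioo_ae_eq_Ioc]
  refine setIntegral_eq_zero_of_forall_eq_zero fun x hx => ?_
  simp [energyDensity, sol.init_ut x hx, hux x hx, huxx x hx]

section Continuity

variable (hρA : ContinuousOn ρA (Icc 0 ℓ)) (hTr : ContinuousOn Tr (Icc 0 ℓ))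
  (hr : ContinuousOn r (Icc 0 ℓ))
include hρA hTr hr

theorem continuousOn_energyDensity :
    ContinuousOn (fun p : ℝ × ℝ => sol.energyDensity p.1 p.2) (Icc 0 ℓ ×ˢ Icc 0 T) :=
  (((hρA.comp_fst_prod _).mul (sol.cont_ut.pow 2)).add
    ((hTr.comp_fst_prod _).mul (sol.cont_ux.pow 2))).add
    ((hr.comp_fst_prod _).mul (sol.cont_uxx.pow 2))

theorem continuousOn_energyDensityDeriv :
    ContinuousOn (fun p : ℝ × ℝ => sol.energyDensityDeriv p.1 p.2) (Icc 0 ℓ ×ˢ Icc 0 T) :=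
  (((continuousOn_const.mul (hρA.comp_fst_prod _)).mul sol.cont_ut |>.mul sol.cont_utt).add
    ((continuousOn_const.mul (hTr.comp_fst_prod _)).mul sol.cont_ux |>.mul sol.cont_uxt)).add
    ((continuousOn_const.mul (hr.comp_fst_prod _)).mul sol.cont_uxx |>.mul sol.cont_uxxt)

theorem continuousOn_energy (hℓ : 0 ≤ ℓ) : ContinuousOn sol.energy (Icc 0 T) :=
  continuousOn_intervalIntegral_of_continuousOn_prod hℓ
    (sol.continuousOn_energyDensity hρA hTr hr)

end Continuity

theorem continuousOn_powerDensity (hμ : ContinuousOn μ (Icc 0 ℓ))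
    (hκ : ContinuousOn κ (Icc 0 ℓ))
    (hF : ContinuousOn (fun p : ℝ × ℝ => F p.1 p.2) (Icc 0 ℓ ×ˢ Icc 0 T)) :
    ContinuousOn (fun p : ℝ × ℝ => sol.powerDensity p.1 p.2) (Icc 0 ℓ ×ˢ Icc 0 T) :=
  (((continuousOn_const.mul sol.cont_ut).mul hF).sub
    ((continuousOn_const.mul (hμ.comp_fst_prod _)).mul (sol.cont_ut.pow 2))).sub
    ((continuousOn_const.mul (hκ.comp_fst_prod _)).mul (sol.cont_uxxt.pow 2))

theorem hasDerivAt_energyDensity {x t : ℝ} (hx : x ∈ Icc 0 ℓ) (ht : t ∈ Icc 0 T) :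
    HasDerivAt (fun s => sol.energyDensity x s) (sol.energyDensityDeriv x t) t := by
  have hut := ((sol.hutt x hx t ht).pow 2).const_mul (ρA x)
  have hux := ((sol.huxt x hx t ht).pow 2).const_mul (Tr x)
  have huxx := ((sol.huxxt x hx t ht).pow 2).const_mul (r x)
  exact ((hut.add hux).add huxx).congr_deriv (by simp only [energyDensityDeriv]; ring)

theorem continuousOn_flux {t : ℝ} (ht : t ∈ Icc 0 T) :
    ContinuousOn (fun x => sol.flux x t) (Icc 0 ℓ) := by
  have hTrux : ContinuousOn (fun x => Tr x * sol.ux x t) (Icc 0 ℓ) :=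
    fun x hx => (sol.hAx x hx t ht).continuousAt.continuousWithinAt
  have hmoment : ContinuousOn (fun x => r x * sol.uxx x t + κ x * sol.uxxt x t) (Icc 0 ℓ) :=
    fun x hx => (sol.hBx x hx t ht).continuousAt.continuousWithinAt
  exact ((continuousOn_const.mul (sol.cont_ut.uncurry_right t ht)).mul
    (hTrux.sub (sol.cont_Bx.uncurry_right t ht))).add
    ((continuousOn_const.mul (sol.cont_uxt.uncurry_right t ht)).mul hmoment)

theorem hasDerivAt_flux {x t : ℝ} (hx : x ∈ Ioo 0 ℓ) (ht : t ∈ Ioo 0 T) :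
    HasDerivAt (fun y => sol.flux y t)
      (sol.energyDensityDeriv x t - sol.powerDensity x t) x := by
  have hxI := Ioo_subset_Icc_self hx
  have htI := Ioo_subset_Icc_self ht
  have hutx : HasDerivAt (fun y => sol.ut y t) (sol.uxt x t) x :=
    hasDerivAt_partial_comm sol.hux (fun y hy s hs => sol.hut y hy s (Ioo_subset_Icc_self hs))
      (fun y hy s hs => sol.huxt y hy s (Ioo_subset_Icc_self hs)) sol.cont_ux sol.cont_uxt
      hx ht
  have huxtx : HasDerivAt (fun y => sol.uxt y t) (sol.uxxt x t) x :=
    hasDerivAt_partial_comm sol.huxx (fun y hy s hs => sol.huxt y hy s (Ioo_subset_Icc_self hs))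
      (fun y hy s hs => sol.huxxt y hy s (Ioo_subset_Icc_self hs)) sol.cont_uxx sol.cont_uxxt
      hx ht
  have hderiv :=
    ((hutx.const_mul 2).mul ((sol.hAx x hxI t htI).sub (sol.hBxx x hxI t htI))).add
      ((huxtx.const_mul 2).mul (sol.hBx x hxI t htI))
  refine hderiv.congr_deriv ?_
  simp only [energyDensityDeriv, powerDensity, Pi.sub_apply]
  linear_combination (-2 * sol.ut x t) * sol.pde x hx t ht

theorem flux_eq_zero_of_u_eq_zero {x₀ : ℝ} (hx₀ : x₀ ∈ Icc 0 ℓ)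
    (hu : ∀ t ∈ Icc 0 T, sol.u x₀ t = 0)
    (hmoment : ∀ t ∈ Icc 0 T, r x₀ * sol.uxx x₀ t + κ x₀ * sol.uxxt x₀ t = 0)
    {t : ℝ} (ht : t ∈ Ioo 0 T) : sol.flux x₀ t = 0 := by
  simp [flux, sol.ut_eq_zero_of_u_eq_zero hx₀ hu ht, hmoment t (Ioo_subset_Icc_self ht)]

theorem powerDensity_le {ρ₀ x t : ℝ} (hρ₀ : 0 < ρ₀) (hρA : ρ₀ ≤ ρA x) (hμ : 0 ≤ μ x)
    (hTr : 0 ≤ Tr x) (hr : 0 ≤ r x) (hκ : 0 ≤ κ x) :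
    sol.powerDensity x t ≤ sol.energyDensity x t / ρ₀ + F x t ^ 2 := by
  have hut : sol.ut x t ^ 2 ≤ sol.energyDensity x t / ρ₀ := by
    rw [le_div_iff₀ hρ₀, energyDensity]
    nlinarith [mul_le_mul_of_nonneg_right hρA (sq_nonneg (sol.ut x t)),
      mul_nonneg hTr (sq_nonneg (sol.ux x t)), mul_nonneg hr (sq_nonneg (sol.uxx x t))]
  rw [powerDensity]
  nlinarith [sq_nonneg (sol.ut x t - F x t), mul_nonneg hμ (sq_nonneg (sol.ut x t)),
    mul_nonneg hκ (sq_nonneg (sol.uxxt x t))]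

section EnergyEstimate

variable (hℓ : 0 ≤ ℓ) (hρA : ContinuousOn ρA (Icc 0 ℓ)) (hμ : ContinuousOn μ (Icc 0 ℓ))
  (hTr : ContinuousOn Tr (Icc 0 ℓ)) (hr : ContinuousOn r (Icc 0 ℓ))
  (hκ : ContinuousOn κ (Icc 0 ℓ))
  (hF : ContinuousOn (fun p : ℝ × ℝ => F p.1 p.2) (Icc 0 ℓ ×ˢ Icc 0 T))
include hℓ hρA hμ hTr hr hκ hF

theorem hasDerivAt_energy {t : ℝ} (ht : t ∈ Ioo 0 T) :
    HasDerivAt sol.energy (∫ x in (0:ℝ)..ℓ, sol.powerDensity x t) t := by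
  have htI := Ioo_subset_Icc_self ht
  have hderiv := hasDerivAt_intervalIntegral_of_continuousOn_prod hℓ ht
    (sol.continuousOn_energyDensity hρA hTr hr) (sol.continuousOn_energyDensityDeriv hρA hTr hr)
    fun x hx s hs => sol.hasDerivAt_energyDensity hx (Ioo_subset_Icc_self hs)
  have hp := intervalIntegrable_of_continuousOn_prod hℓ
    (sol.continuousOn_energyDensityDeriv hρA hTr hr) htI
  have hq := intervalIntegrable_of_continuousOn_prod hℓ
    (sol.continuousOn_powerDensity hμ hκ hF) htI
  have hbalance := integral_eq_sub_of_hasDerivAt_of_le hℓ (sol.continuousOn_flux htI)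
    (fun x hx => sol.hasDerivAt_flux hx ht) (hp.sub hq)
  rw [integral_sub hp hq,
    sol.flux_eq_zero_of_u_eq_zero (right_mem_Icc.2 hℓ) sol.bc_ul sol.bc_ml ht,
    sol.flux_eq_zero_of_u_eq_zero (left_mem_Icc.2 hℓ) sol.bc_u0 sol.bc_m0 ht,
    sub_zero, sub_eq_zero] at hbalance
  exact hbalance ▸ hderiv

theorem energy_le (hT : 0 ≤ T) {ρ₀ : ℝ} (hρ₀ : 0 < ρ₀) (hρAb : ∀ x ∈ Icc 0 ℓ, ρ₀ ≤ ρA x)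
    (hμb : ∀ x ∈ Icc 0 ℓ, 0 ≤ μ x) (hTrb : ∀ x ∈ Icc 0 ℓ, 0 ≤ Tr x)
    (hrb : ∀ x ∈ Icc 0 ℓ, 0 ≤ r x) (hκb : ∀ x ∈ Icc 0 ℓ, 0 ≤ κ x) {t : ℝ} (ht : t ∈ Icc 0 T) :
    sol.energy t ≤ Real.exp (t / ρ₀) * ∫ s in (0:ℝ)..T, ∫ x in (0:ℝ)..ℓ, F x s ^ 2 := by
  have hF2 : ContinuousOn (fun p : ℝ × ℝ => F p.1 p.2 ^ 2) (Icc 0 ℓ ×ˢ Icc 0 T) := hF.pow 2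
  have hpower : ∀ s ∈ Ioo 0 T, ∫ x in (0:ℝ)..ℓ, sol.powerDensity x s
      ≤ ρ₀⁻¹ * sol.energy s + ∫ x in (0:ℝ)..ℓ, F x s ^ 2 := by
    intro s hs
    have hsI := Ioo_subset_Icc_self hs
    have he := intervalIntegrable_of_continuousOn_prod hℓ
      (sol.continuousOn_energyDensity hρA hTr hr) hsI
    have hF2s := intervalIntegrable_of_continuousOn_prod (f := fun x s => F x s ^ 2) hℓ hF2 hsI
    rw [energy, ← intervalIntegral.integral_const_mul, ← integral_add (he.const_mul _) hF2s]
    refine integral_mono_on hℓ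
      (intervalIntegrable_of_continuousOn_prod hℓ (sol.continuousOn_powerDensity hμ hκ hF) hsI)
      ((he.const_mul _).add hF2s) fun x hx => ?_
    rw [← div_eq_inv_mul]
    exact sol.powerDensity_le hρ₀ (hρAb x hx) (hμb x hx) (hTrb x hx) (hrb x hx) (hκb x hx)
  have := le_exp_mul_integral_of_hasDerivAt_le (inv_nonneg.2 hρ₀.le)
    (sol.continuousOn_energy hρA hTr hr hℓ)
    (continuousOn_intervalIntegral_of_continuousOn_prod (f := fun x s => F x s ^ 2) hℓ hF2)
    (fun s _ => integral_nonneg hℓ fun x _ => sq_nonneg _)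
    (fun s hs => sol.hasDerivAt_energy hℓ hρA hμ hTr hr hκ hF hs) hpower
    (sol.energy_zero hℓ hT).le ht
  rwa [sub_zero, inv_mul_eq_div] at this

theorem mul_integral_integral_uxx_sq_le (hT : 0 ≤ T) {ρ₀ r₀ : ℝ} (hρ₀ : 0 < ρ₀) (hr₀ : 0 < r₀)
    (hρAb : ∀ x ∈ Icc 0 ℓ, ρ₀ ≤ ρA x)
    (hμb : ∀ x ∈ Icc 0 ℓ, 0 ≤ μ x) (hTrb : ∀ x ∈ Icc 0 ℓ, 0 ≤ Tr x)
    (hrb : ∀ x ∈ Icc 0 ℓ, r₀ ≤ r x) (hκb : ∀ x ∈ Icc 0 ℓ, 0 ≤ κ x) :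
    r₀ * ∫ t in (0:ℝ)..T, ∫ x in (0:ℝ)..ℓ, sol.uxx x t ^ 2
      ≤ ρ₀ * (Real.exp (T / ρ₀) - 1) * ∫ t in (0:ℝ)..T, ∫ x in (0:ℝ)..ℓ, F x t ^ 2 := by
  have huxx2 : ContinuousOn (fun p : ℝ × ℝ => sol.uxx p.1 p.2 ^ 2) (Icc 0 ℓ ×ˢ Icc 0 T) :=
    sol.cont_uxx.pow 2
  have hslice : ∀ t ∈ Icc 0 T, r₀ * ∫ x in (0:ℝ)..ℓ, sol.uxx x t ^ 2 ≤ sol.energy t := by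
    intro t ht
    rw [← intervalIntegral.integral_const_mul]
    refine integral_mono_on hℓ
      ((intervalIntegrable_of_continuousOn_prod (f := fun x t => sol.uxx x t ^ 2) hℓ huxx2
        ht).const_mul _)
      (intervalIntegrable_of_continuousOn_prod hℓ (sol.continuousOn_energyDensity hρA hTr hr) ht)
      fun x hx => ?_
    rw [energyDensity]
    nlinarith [mul_nonneg (hρ₀.le.trans (hρAb x hx)) (sq_nonneg (sol.ut x t)),
      mul_nonneg (hTrb x hx) (sq_nonneg (sol.ux x t)),
      mul_le_mul_of_nonneg_right (hrb x hx) (sq_nonneg (sol.uxx x t))]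
  have hJ := continuousOn_intervalIntegral_of_continuousOn_prod
    (f := fun x t => sol.uxx x t ^ 2) hℓ huxx2
  calc r₀ * ∫ t in (0:ℝ)..T, ∫ x in (0:ℝ)..ℓ, sol.uxx x t ^ 2
      = ∫ t in (0:ℝ)..T, r₀ * ∫ x in (0:ℝ)..ℓ, sol.uxx x t ^ 2 :=
        (intervalIntegral.integral_const_mul _ _).symm
    _ ≤ ∫ t in (0:ℝ)..T, Real.exp (t / ρ₀) * ∫ s in (0:ℝ)..T, ∫ x in (0:ℝ)..ℓ, F x s ^ 2 := by
        refine integral_mono_on hT ((hJ.intervalIntegrable_of_Icc hT).const_mul _)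
          (Continuous.intervalIntegrable (by fun_prop) _ _) fun t ht => (hslice t ht).trans ?_
        exact sol.energy_le hℓ hρA hμ hTr hr hκ hF hT hρ₀ hρAb hμb hTrb
          (fun x hx => hr₀.le.trans (hrb x hx)) hκb ht
    _ = ρ₀ * (Real.exp (T / ρ₀) - 1) * ∫ t in (0:ℝ)..T, ∫ x in (0:ℝ)..ℓ, F x t ^ 2 := by
        rw [intervalIntegral.integral_mul_const, integral_comp_div Real.exp hρ₀.ne']
        simp

end EnergyEstimate

theorem integral_ux_sq_le (hℓ : 0 < ℓ) (hT : 0 ≤ T) :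
    (∫ t in (0:ℝ)..T, sol.ux 0 t ^ 2)
        ≤ ℓ / 3 * ∫ t in (0:ℝ)..T, ∫ x in (0:ℝ)..ℓ, sol.uxx x t ^ 2 ∧
      (∫ t in (0:ℝ)..T, sol.ux ℓ t ^ 2)
        ≤ ℓ / 3 * ∫ t in (0:ℝ)..T, ∫ x in (0:ℝ)..ℓ, sol.uxx x t ^ 2 := by
  have htrace : ∀ t ∈ Icc 0 T,
      sol.ux 0 t ^ 2 ≤ ℓ / 3 * ∫ x in (0:ℝ)..ℓ, sol.uxx x t ^ 2 ∧
        sol.ux ℓ t ^ 2 ≤ ℓ / 3 * ∫ x in (0:ℝ)..ℓ, sol.uxx x t ^ 2 := fun t ht => by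
    simpa using sq_deriv_le_of_eq_zero hℓ (fun x hx => sol.hux x hx t ht)
      (fun x hx => sol.huxx x hx t ht) (sol.cont_uxx.uncurry_right t ht) (sol.bc_u0 t ht)
      (sol.bc_ul t ht)
  have hJ := (continuousOn_intervalIntegral_of_continuousOn_prod
    (f := fun x t => sol.uxx x t ^ 2) hℓ.le (sol.cont_uxx.pow 2)).intervalIntegrable_of_Icc
    (μ := volume) hT
  have hslope : ∀ x₀ ∈ Icc 0 ℓ, IntervalIntegrable (fun t => sol.ux x₀ t ^ 2) volume 0 T :=
    fun x₀ hx₀ => ((sol.cont_ux.uncurry_left x₀ hx₀).pow 2).intervalIntegrable_of_Icc hT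
  rw [← intervalIntegral.integral_const_mul]
  exact ⟨integral_mono_on hT (hslope 0 (left_mem_Icc.2 hℓ.le)) (hJ.const_mul _)
      fun t ht => (htrace t ht).1,
    integral_mono_on hT (hslope ℓ (right_mem_Icc.2 hℓ.le)) (hJ.const_mul _)
      fun t ht => (htrace t ht).2⟩

end ForwardSol

/-- **Boundary slope trace estimates of Corollary 1**, with
`C₁² = (5ℓρ₀/3)(C_e² − 1)` and `C_e² = exp(T/ρ₀)`. -/
theorem boundary_slope_trace_estimate
    (ℓ T ρ₀ r₀ κ₀ : ℝ) (hℓ : 0 < ℓ) (hT : 0 < T)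
    (hρ₀ : 0 < ρ₀) (hr₀ : 0 < r₀) (hκ₀ : 0 < κ₀)
    (ρA μ Tr r κ : ℝ → ℝ) (F : ℝ → ℝ → ℝ)
    (hρA : ContDiffOn ℝ (⊤ : ℕ∞) ρA (Icc 0 ℓ))
    (hμ : ContDiffOn ℝ (⊤ : ℕ∞) μ (Icc 0 ℓ))
    (hTr : ContDiffOn ℝ (⊤ : ℕ∞) Tr (Icc 0 ℓ))
    (hr : ContDiffOn ℝ (⊤ : ℕ∞) r (Icc 0 ℓ))
    (hκ : ContDiffOn ℝ (⊤ : ℕ∞) κ (Icc 0 ℓ))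
    (hρAb : ∀ x ∈ Icc (0:ℝ) ℓ, ρ₀ ≤ ρA x)
    (hμb : ∀ x ∈ Icc (0:ℝ) ℓ, 0 ≤ μ x)
    (hTrb : ∀ x ∈ Icc (0:ℝ) ℓ, 0 ≤ Tr x)
    (hrb : ∀ x ∈ Icc (0:ℝ) ℓ, r₀ ≤ r x)
    (hκb : ∀ x ∈ Icc (0:ℝ) ℓ, κ₀ ≤ κ x)
    (hF : ContinuousOn (fun p : ℝ × ℝ => F p.1 p.2) (Icc 0 ℓ ×ˢ Icc 0 T))
    (sol : ForwardSol ℓ T ρA μ Tr r κ F) :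
    (∫ t in (0:ℝ)..T, (sol.ux 0 t) ^ 2)
      ≤ (5 * ℓ * ρ₀ / 3) * (Real.exp (T / ρ₀) - 1) / r₀ * (∫ t in (0:ℝ)..T, ∫ x in (0:ℝ)..ℓ, (F x t) ^ 2) ∧
    (∫ t in (0:ℝ)..T, (sol.ux ℓ t) ^ 2)
      ≤ (5 * ℓ * ρ₀ / 3) * (Real.exp (T / ρ₀) - 1) / r₀ * (∫ t in (0:ℝ)..T, ∫ x in (0:ℝ)..ℓ, (F x t) ^ 2) := by
  have hbending := sol.mul_integral_integral_uxx_sq_le hℓ.le hρA.continuousOn hμ.continuousOn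
    hTr.continuousOn hr.continuousOn hκ.continuousOn hF hT.le hρ₀ hr₀ hρAb hμb hTrb hrb
    fun x hx => hκ₀.le.trans (hκb x hx)
  obtain ⟨hleft, hright⟩ := sol.integral_ux_sq_le hℓ hT.le
  set G := ∫ t in (0:ℝ)..T, ∫ x in (0:ℝ)..ℓ, F x t ^ 2
  have hG : 0 ≤ G := integral_nonneg hT.le fun t _ => integral_nonneg hℓ.le fun x _ => sq_nonneg _
  have hexp : 0 ≤ Real.exp (T / ρ₀) - 1 := sub_nonneg.2 (Real.one_le_exp (by positivity))
  have hI := (le_div_iff₀' hr₀).2 hbending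
  have hbound : ℓ / 3 * ∫ t in (0:ℝ)..T, ∫ x in (0:ℝ)..ℓ, sol.uxx x t ^ 2
      ≤ 5 * ℓ * ρ₀ / 3 * (Real.exp (T / ρ₀) - 1) / r₀ * G :=
    calc _ ≤ ℓ / 3 * (ρ₀ * (Real.exp (T / ρ₀) - 1) * G / r₀) := by gcongr
      _ ≤ 5 * (ℓ / 3 * (ρ₀ * (Real.exp (T / ρ₀) - 1) * G / r₀)) :=
        le_mul_of_one_le_left (by positivity) (by norm_num)
      _ = _ := by ring
  exact ⟨hleft.trans hbound, hright.trans hbound⟩
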